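/- Let a be a real number with a ≠ 0 and a ≠ 1/4. For z ∈ (0,1) define ψ(z) = arcsin√(1 − √(1−z)) and F(φ,k) = ∫₀^φ dθ/√(1−k²sin²θ) (the incomplete elliptic integral of the first kind). Then for every z ∈ (0,1), the function z ↦ (√2/(a(4a−1)))·₂F₁(a, 1/4−a; 1/2; z) + 2z^(1/2)(1−z)^(3/4) F(ψ(z), 1/√2)·₂F₁(a+1, 5/4−a; 3/2; z) has derivative at z equal to z^(−1/2)(1−z)^(−1/4) F(ψ(z), 1/√2)·₂F₁(a, 1/4−a; 1/2; z). (Equivalently, ∫ z^(−1/2)(1−z)^(−1/4) F(ψ(z),1/√2) ₂F₁(a,1/4−a;1/2;z)dz = (√2/(a(4a−1)))₂F₁(a,1/4−a;1/2;z) + 2z^(1/2)(1−z)^(3/4) F(ψ(z),1/√2) ₂F₁(a+1,5/4−a;3/2;z) + c.) -/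

import Mathlib

/-!
Write `G = ₂F₁(a, 1/4 - a; 1/2; z)`, `H = ₂F₁(a + 1, 5/4 - a; 3/2; z)`, `E(z) = F(ψ(z), 1/√2)`
and `Q = z^(-1/2) (1 - z)^(-1/4)`, and differentiate term by term. Gauss' formula
`G' = -a (4a - 1)/2 · H` and `E'(z) = √2 / (4 z^(1/2) (1 - z)^(3/4))` make the two terms in which
`H` appears without `E` cancel. What is left is `Q E ((1 - 5z/2) H + 2 z (1 - z) H')`, and this is
`Q E G` by the contiguous relation
`c F(a, b; c) = (c - (a + b + 1) z) F(a + 1, b + 1; c + 1) + z (1 - z) F'(a + 1, b + 1; c + 1)`,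
which is checked coefficientwise on the power series.
-/

open Real

namespace FormalMultilinearSeries

variable {𝕜 F : Type*} [NontriviallyNormedField 𝕜] [NormedAddCommGroup F] [NormedSpace 𝕜 F]
  [CompleteSpace F] (p : FormalMultilinearSeries 𝕜 𝕜 F) {z : 𝕜}

theorem hasSum_deriv_sum (hz : ‖z‖ₑ < p.radius) :
    HasSum (fun n => z ^ n • ((n + 1) • p.coeff (n + 1))) (deriv p.sum z) := by
  have hz' : z ∈ Metric.eball (0 : 𝕜) p.derivSeries.radius := by
    simpa using hz.trans_le p.radius_le_radius_derivSeries
  rw [(p.hasFDerivAt_sum hz).hasDerivAt.deriv]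
  exact ((p.derivSeries.hasSum hz').mapL (ContinuousLinearMap.apply 𝕜 F 1)).congr_fun
    fun n => by simp

theorem hasSum_nsmul_coeff_deriv_sum (hz : ‖z‖ₑ < p.radius) :
    HasSum (fun n => z ^ n • (n • p.coeff n)) (z • deriv p.sum z) := by
  refine (hasSum_nat_add_iff' 1).mp ?_
  simpa [pow_succ', mul_smul] using (p.hasSum_deriv_sum hz).const_smul z

end FormalMultilinearSeries

section Hypergeometric

variable {𝕂 : Type*} [RCLike 𝕂] (a b : 𝕂)

theorem ordinaryHypergeometricCoefficient_succ_left (c : 𝕂) (n : ℕ) :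
    ordinaryHypergeometricCoefficient a b c (n + 1)
      = a * b / (c * (n + 1)) * ordinaryHypergeometricCoefficient (a + 1) (b + 1) (c + 1) n := by
  simp only [ordinaryHypergeometricCoefficient, ascPochhammer_succ_left, Polynomial.eval_mul,
    Polynomial.eval_X, Polynomial.eval_comp, Polynomial.eval_add, Polynomial.eval_one,
    Nat.factorial_succ, Nat.cast_mul, Nat.cast_succ]
  field_simp

theorem ordinaryHypergeometricCoefficient_succ_right (c : 𝕂) (n : ℕ) :
    ordinaryHypergeometricCoefficient a b c (n + 1)
      = (a + n) * (b + n) / ((c + n) * (n + 1)) * ordinaryHypergeometricCoefficient a b c n := by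
  simp only [ordinaryHypergeometricCoefficient, ascPochhammer_succ_eval,
    Nat.factorial_succ, Nat.cast_mul, Nat.cast_succ]
  field_simp

variable {c : 𝕂}

theorem ordinaryHypergeometricCoefficient_contiguous (hc : ∀ n : ℕ, (n : 𝕂) ≠ -c) (n : ℕ) :
    c * ordinaryHypergeometricCoefficient a b c (n + 1)
      = (c + n + 1) * ordinaryHypergeometricCoefficient (a + 1) (b + 1) (c + 1) (n + 1)
        - (a + b + 1 + n) * ordinaryHypergeometricCoefficient (a + 1) (b + 1) (c + 1) n := by
  have hc₀ : c ≠ 0 := fun h => hc 0 (by simp [h])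
  have hcn : c + 1 + n ≠ 0 := fun h => hc (n + 1) (by push_cast; linear_combination h)
  rw [ordinaryHypergeometricCoefficient_succ_left, ordinaryHypergeometricCoefficient_succ_right]
  field_simp
  ring

theorem one_le_radius_ordinaryHypergeometricSeries (hc : ∀ n : ℕ, (n : 𝕂) ≠ -c) :
    1 ≤ (ordinaryHypergeometricSeries 𝕂 a b c).radius := by
  by_cases habc : ∀ n : ℕ, (n : 𝕂) ≠ -a ∧ (n : 𝕂) ≠ -b ∧ (n : 𝕂) ≠ -c
  · exact (ordinaryHypergeometricSeries_radius_eq_one 𝕂 a b c habc).ge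
  obtain ⟨n, hn⟩ := not_forall.mp habc
  by_cases ha : (n : 𝕂) = -a
  · rw [show a = -n by rw [ha, neg_neg], ordinaryHypergeometric_radius_top_of_neg_nat₁]
    exact le_top
  by_cases hb : (n : 𝕂) = -b
  · rw [show b = -n by rw [hb, neg_neg], ordinaryHypergeometric_radius_top_of_neg_nat₂]
    exact le_top
  exact absurd ⟨ha, hb, hc n⟩ hn

variable {z : 𝕂}

theorem enorm_lt_radius_ordinaryHypergeometricSeries (hc : ∀ n : ℕ, (n : 𝕂) ≠ -c)
    (hz : ‖z‖ < 1) : ‖z‖ₑ < (ordinaryHypergeometricSeries 𝕂 a b c).radius :=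
  lt_of_lt_of_le (by simpa [enorm_eq_nnnorm, ← NNReal.coe_lt_coe] using hz)
    (one_le_radius_ordinaryHypergeometricSeries a b hc)

theorem hasSum_ordinaryHypergeometric (hc : ∀ n : ℕ, (n : 𝕂) ≠ -c) (hz : ‖z‖ < 1) :
    HasSum (fun n => ordinaryHypergeometricCoefficient a b c n * z ^ n) (₂F₁ a b c z) := by
  have hz' : z ∈ Metric.eball (0 : 𝕂) (ordinaryHypergeometricSeries 𝕂 a b c).radius := by
    simpa using enorm_lt_radius_ordinaryHypergeometricSeries a b hc hz
  simpa [ordinaryHypergeometric, ordinaryHypergeometricSeries, mul_comm] using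
    (ordinaryHypergeometricSeries 𝕂 a b c).hasSum hz'

theorem hasDerivAt_ordinaryHypergeometric (hc : ∀ n : ℕ, (n : 𝕂) ≠ -c) (hz : ‖z‖ < 1) :
    HasDerivAt (₂F₁ a b c) (a * b / c * ₂F₁ (a + 1) (b + 1) (c + 1) z) z := by
  have hc₁ : ∀ n : ℕ, (n : 𝕂) ≠ -(c + 1) := fun n h => hc (n + 1) (by push_cast; rw [h]; ring)
  set p := ordinaryHypergeometricSeries 𝕂 a b c
  have hz' : ‖z‖ₑ < p.radius := enorm_lt_radius_ordinaryHypergeometricSeries a b hc hz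
  have hcoeff : (fun n : ℕ => z ^ n • ((n + 1) • p.coeff (n + 1))) = fun n =>
      a * b / c * (ordinaryHypergeometricCoefficient (a + 1) (b + 1) (c + 1) n * z ^ n) := by
    funext n
    simp only [p]
    rw [ordinaryHypergeometricSeries, FormalMultilinearSeries.coeff_ofScalars,
      ordinaryHypergeometricCoefficient_succ_left, smul_eq_mul, nsmul_eq_mul, Nat.cast_succ]
    field_simp
  have hderiv := p.hasSum_deriv_sum hz'
  rw [hcoeff] at hderiv
  exact (p.hasFDerivAt_sum hz').differentiableAt.hasDerivAt.congr_deriv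
    (hderiv.unique ((hasSum_ordinaryHypergeometric (a + 1) (b + 1) hc₁ hz).mul_left (a * b / c)))

theorem ordinaryHypergeometric_contiguous (hc : ∀ n : ℕ, (n : 𝕂) ≠ -c) (hz : ‖z‖ < 1) :
    c * ₂F₁ a b c z = (c - (a + b + 1) * z) * ₂F₁ (a + 1) (b + 1) (c + 1) z
      + z * (1 - z) * deriv (₂F₁ (a + 1) (b + 1) (c + 1)) z := by
  have hc₁ : ∀ n : ℕ, (n : 𝕂) ≠ -(c + 1) := fun n h => hc (n + 1) (by push_cast; rw [h]; ring)
  set g := ordinaryHypergeometricCoefficient a b c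
  set h := ordinaryHypergeometricCoefficient (a + 1) (b + 1) (c + 1)
  set G := ₂F₁ a b c z
  set H := ₂F₁ (a + 1) (b + 1) (c + 1) z
  set D := deriv (₂F₁ (a + 1) (b + 1) (c + 1)) z
  have hG : HasSum (fun n => g n * z ^ n) G := hasSum_ordinaryHypergeometric a b hc hz
  have hH : HasSum (fun n => h n * z ^ n) H := hasSum_ordinaryHypergeometric _ _ hc₁ hz
  have hD : HasSum (fun n : ℕ => n * h n * z ^ n) (z * D) :=
    ((ordinaryHypergeometricSeries 𝕂 (a + 1) (b + 1) (c + 1)).hasSum_nsmul_coeff_deriv_sum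
      (enorm_lt_radius_ordinaryHypergeometricSeries _ _ hc₁ hz)).congr_fun fun n => by
        rw [ordinaryHypergeometricSeries, FormalMultilinearSeries.coeff_ofScalars, smul_eq_mul,
          nsmul_eq_mul]
        ring
  have hsum : HasSum (fun n => c * g n * z ^ n - (c + n) * h n * z ^ n)
      (c * G - (c * H + z * D)) :=
    ((hG.mul_left c).sub ((hH.mul_left c).add hD)).congr_fun fun n => by ring
  have hshift : HasSum (fun n : ℕ => -z * ((a + b + 1 + n) * h n * z ^ n))
      (-z * ((a + b + 1) * H + z * D)) :=
    (((hH.mul_left (a + b + 1)).add hD).mul_left (-z)).congr_fun fun n => by ring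
  -- The `n = 0` term of `hsum` vanishes and its `z ^ (n + 1)` term is the `n`-th one of `hshift`.
  have hsum' := (hasSum_nat_add_iff' 1).mpr hsum
  have hg₀ : g 0 = 1 := by simp [g, ordinaryHypergeometricCoefficient]
  have hh₀ : h 0 = 1 := by simp [h, ordinaryHypergeometricCoefficient]
  simp only [Finset.range_one, Finset.sum_singleton, hg₀, hh₀] at hsum'
  have := hsum'.unique <| hshift.congr_fun fun n => by
    push_cast
    linear_combination z ^ (n + 1) * ordinaryHypergeometricCoefficient_contiguous a b hc n
  linear_combination this

end Hypergeometric

noncomputable def ellipticF (φ k : ℝ) : ℝ :=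
  ∫ θ in (0 : ℝ)..φ, 1 / √(1 - k ^ 2 * sin θ ^ 2)

theorem hasDerivAt_ellipticF {k : ℝ} (hk : k ^ 2 < 1) (φ : ℝ) :
    HasDerivAt (fun φ => ellipticF φ k) (1 / √(1 - k ^ 2 * sin φ ^ 2)) φ := by
  have hpos : ∀ θ, 0 < 1 - k ^ 2 * sin θ ^ 2 := fun θ => by
    nlinarith [sin_sq_le_one θ, sq_nonneg k]
  have hcont : Continuous fun θ => 1 / √(1 - k ^ 2 * sin θ ^ 2) :=
    continuous_const.div (by fun_prop) fun θ => (sqrt_pos.2 (hpos θ)).ne'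
  exact (hcont.integral_hasStrictDerivAt 0 φ).hasDerivAt

theorem hasDerivAt_arcsin_sqrt_one_sub_sqrt_one_sub {z : ℝ} (hz : z ∈ Set.Ioo 0 1) :
    HasDerivAt (fun t => arcsin √(1 - √(1 - t)))
      (1 / (4 * √(1 - √(1 - z)) * √(1 - z) * √√(1 - z))) z := by
  obtain ⟨hz0, hz1⟩ := hz
  set w := √(1 - z) with hw
  set v := √(1 - w) with hv
  have hw0 : 0 < w := sqrt_pos.2 (by linarith)
  have hw1 : w < 1 := (sqrt_lt' one_pos).2 (by linarith)
  have hv0 : 0 < v := sqrt_pos.2 (by linarith)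
  have hv1 : v < 1 := (sqrt_lt' one_pos).2 (by linarith)
  have hvv : 1 - v ^ 2 = w := by rw [hv, sq_sqrt (by linarith)]; ring
  have hdw : HasDerivAt (fun t => √(1 - t)) (-1 / (2 * w)) z := by
    simpa [div_eq_mul_inv, mul_comm] using ((hasDerivAt_id' z).const_sub 1).sqrt (by linarith)
  have hdv : HasDerivAt (fun t => √(1 - √(1 - t))) (1 / (4 * v * w)) z := by
    refine ((hdw.const_sub 1).sqrt (sub_pos.2 hw1).ne').congr_deriv ?_
    rw [← hv]
    field_simp
    ring
  refine ((hasDerivAt_arcsin (by linarith) hv1.ne).comp z hdv).congr_deriv ?_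
  rw [hvv]
  field_simp

theorem hasDerivAt_ellipticF_arcsin_sqrt {z : ℝ} (hz : z ∈ Set.Ioo 0 1) :
    HasDerivAt (fun t => ellipticF (arcsin √(1 - √(1 - t))) (1 / √2))
      (√2 / (4 * z ^ (1 / 2 : ℝ) * (1 - z) ^ (3 / 4 : ℝ))) z := by
  obtain ⟨hz0, hz1⟩ := hz
  have hk : (1 / √2) ^ 2 = (1 / 2 : ℝ) := by rw [div_pow, sq_sqrt zero_le_two, one_pow]
  have hw1 : √(1 - z) < 1 := (sqrt_lt' one_pos).2 (by linarith)
  have hw0 : 0 < √(1 - z) := sqrt_pos.2 (by linarith)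
  have hv0 : 0 < √(1 - √(1 - z)) := sqrt_pos.2 (by linarith)
  have hsin : sin (arcsin √(1 - √(1 - z))) = √(1 - √(1 - z)) :=
    sin_arcsin (by linarith) ((sqrt_lt' one_pos).2 (by linarith)).le
  have hsqrt : z ^ (1 / 2 : ℝ) = √(1 - √(1 - z)) * √(1 + √(1 - z)) := by
    rw [← sqrt_eq_rpow, ← sqrt_mul (by linarith)]
    congr 1
    linear_combination sq_sqrt (by linarith : (0 : ℝ) ≤ 1 - z)
  have hrpow : (1 - z) ^ (3 / 4 : ℝ) = √(1 - z) * √√(1 - z) := by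
    rw [sqrt_eq_rpow, sqrt_eq_rpow, ← rpow_mul (by linarith), ← rpow_add (by linarith)]
    norm_num
  refine ((hasDerivAt_ellipticF (by rw [hk]; norm_num) _).comp z
    (hasDerivAt_arcsin_sqrt_one_sub_sqrt_one_sub ⟨hz0, hz1⟩)).congr_deriv ?_
  rw [hsin, hk, sq_sqrt (by linarith : (0 : ℝ) ≤ 1 - √(1 - z)), hsqrt, hrpow]
  have hhalf : 1 - 1 / 2 * (1 - √(1 - z)) = (1 + √(1 - z)) / 2 := by ring
  rw [hhalf, sqrt_div' _ zero_le_two]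
  field_simp

theorem mul_rpow_neg_half_mul_rpow_neg_quarter {z : ℝ} (hz : z ∈ Set.Ioo 0 1) :
    z * (1 - z) * (z ^ (-(1 : ℝ) / 2) * (1 - z) ^ (-(1 : ℝ) / 4))
      = z ^ (1 / 2 : ℝ) * (1 - z) ^ (3 / 4 : ℝ) := by
  rw [mul_mul_mul_comm, ← rpow_one_add' hz.1.le, ← rpow_one_add' (sub_pos.2 hz.2).le] <;> norm_num

theorem hasDerivAt_two_mul_rpow_mul_rpow {z : ℝ} (hz : z ∈ Set.Ioo 0 1) :
    HasDerivAt (fun t => 2 * t ^ (1 / 2 : ℝ) * (1 - t) ^ (3 / 4 : ℝ))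
      ((1 - 5 / 2 * z) * (z ^ (-(1 : ℝ) / 2) * (1 - z) ^ (-(1 : ℝ) / 4))) z := by
  have hz0 : z ≠ 0 := hz.1.ne'
  have h1z : 0 < 1 - z := sub_pos.2 hz.2
  have hX := (hasDerivAt_rpow_const (p := 1 / 2) (Or.inl hz0)).const_mul 2
  have hY := ((hasDerivAt_id' z).const_sub 1).rpow_const (p := 3 / 4) (Or.inl h1z.ne')
  refine (hX.mul hY).congr_deriv ?_
  have hQ : z ^ (-(1 : ℝ) / 2) * (1 - z) ^ (-(1 : ℝ) / 4)
      = z ^ (1 / 2 : ℝ) * (1 - z) ^ (3 / 4 : ℝ) / (z * (1 - z)) := by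
    rw [eq_div_iff (mul_ne_zero hz0 h1z.ne'), mul_comm, mul_rpow_neg_half_mul_rpow_neg_quarter hz]
  rw [hQ, rpow_sub_one hz0, rpow_sub_one h1z.ne']
  field_simp
  ring

/-- New indefinite integral of a product of a hypergeometric function with an incomplete
elliptic integral of the first kind `F(φ,k) = ∫₀^φ dθ/√(1-k²sin²θ)`: for real `a` with
`a ≠ 0`, `a ≠ 1/4`, and `ψ(z) = arcsin √(1-√(1-z))`, for every `z ∈ (0,1)` the function
`z ↦ (√2/(a(4a-1))) ₂F₁(a,1/4-a;1/2;z)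
  + 2 z^(1/2) (1-z)^(3/4) F(ψ(z),1/√2) ₂F₁(a+1,5/4-a;3/2;z)`
has derivative `z^(-1/2) (1-z)^(-1/4) F(ψ(z),1/√2) ₂F₁(a,1/4-a;1/2;z)` at `z`. -/
theorem hypergeometric_elliptic_integral
    (a : ℝ) (ha0 : a ≠ 0) (ha4 : a ≠ 1 / 4)
    (F : ℝ → ℝ → ℝ) (ψ : ℝ → ℝ)
    (hF : ∀ φ k : ℝ, F φ k = ∫ θ in (0 : ℝ)..φ, 1 / Real.sqrt (1 - k ^ 2 * Real.sin θ ^ 2))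
    (hψ : ∀ z : ℝ, ψ z = Real.arcsin (Real.sqrt (1 - Real.sqrt (1 - z)))) :
    ∀ z ∈ Set.Ioo (0 : ℝ) 1,
      HasDerivAt
        (fun t => Real.sqrt 2 / (a * (4 * a - 1)) * ₂F₁ a (1 / 4 - a) (1 / 2) t
          + 2 * t ^ ((1 : ℝ) / 2) * (1 - t) ^ ((3 : ℝ) / 4)
            * F (ψ t) (1 / Real.sqrt 2) * ₂F₁ (a + 1) (5 / 4 - a) (3 / 2) t)
        (z ^ (-(1 : ℝ) / 2) * (1 - z) ^ (-(1 : ℝ) / 4)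
          * F (ψ z) (1 / Real.sqrt 2) * ₂F₁ a (1 / 4 - a) (1 / 2) z) z := by
  intro z hz
  obtain rfl : F = ellipticF := funext₂ hF
  obtain rfl : ψ = fun t => arcsin √(1 - √(1 - t)) := funext hψ
  have hz1 : ‖z‖ < 1 := by rw [Real.norm_eq_abs, abs_lt]; constructor <;> linarith [hz.1, hz.2]
  have hc : ∀ c : ℝ, 0 < c → ∀ n : ℕ, (n : ℝ) ≠ -c := fun c hc n h => by
    linarith [n.cast_nonneg (α := ℝ)]
  have hG := hasDerivAt_ordinaryHypergeometric a (1 / 4 - a) (hc _ one_half_pos) hz1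
  have hcont := ordinaryHypergeometric_contiguous a (1 / 4 - a) (hc _ one_half_pos) hz1
  rw [show 1 / 4 - a + 1 = 5 / 4 - a by ring, show (1 / 2 : ℝ) + 1 = 3 / 2 by norm_num] at hG hcont
  have hH := (hasDerivAt_ordinaryHypergeometric (a + 1) (5 / 4 - a)
    (hc (3 / 2) (by norm_num)) hz1).differentiableAt.hasDerivAt
  have hE := hasDerivAt_ellipticF_arcsin_sqrt hz
  have hP := hasDerivAt_two_mul_rpow_mul_rpow hz
  refine ((hG.const_mul _).add ((hP.mul hE).mul hH)).congr_deriv ?_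
  simp only [Pi.mul_apply]
  have h4a : 4 * a - 1 ≠ 0 := fun h => ha4 (by linarith)
  have hC : √2 / (a * (4 * a - 1)) * (a * (1 / 4 - a) / (1 / 2)) = -(√2 / 2) := by
    rw [show a * (1 / 4 - a) / (1 / 2) = -(a * (4 * a - 1) / 2) by ring, mul_neg,
      div_mul_div_cancel₀ (mul_ne_zero ha0 h4a)]
  have hX : 0 < z ^ (1 / 2 : ℝ) := rpow_pos_of_pos hz.1 _
  have hY : 0 < (1 - z) ^ (3 / 4 : ℝ) := rpow_pos_of_pos (sub_pos.2 hz.2) _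
  have hPE : 2 * z ^ (1 / 2 : ℝ) * (1 - z) ^ (3 / 4 : ℝ)
      * (√2 / (4 * z ^ (1 / 2 : ℝ) * (1 - z) ^ (3 / 4 : ℝ))) = √2 / 2 := by
    field_simp
    norm_num
  linear_combination ₂F₁ (a + 1) (5 / 4 - a) (3 / 2) z * (hC + hPE)
    + ellipticF (arcsin √(1 - √(1 - z))) (1 / √2) * deriv (₂F₁ (a + 1) (5 / 4 - a) (3 / 2)) z
      * (-2 * mul_rpow_neg_half_mul_rpow_neg_quarter hz)
    - 2 * (z ^ (-(1 : ℝ) / 2) * (1 - z) ^ (-(1 : ℝ) / 4))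
      * ellipticF (arcsin √(1 - √(1 - z))) (1 / √2) * hcont
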